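/- Let (A, B, i, j) be stable framed representation data on spaces (D_v) with framing (F_v) satisfying the moment map equations at every vertex. Then for every vertex v, the dimension of the subspace ⋂_{e : s(e)=v} ker(A_e) ∩ ⋂_{e : t(e)=v} ker(B_e) ∩ ker(j_v) of D_v is at least 2·dim D_v − ∑_{e : s(e)=v} dim D_{t(e)} − ∑_{e : t(e)=v} dim D_{s(e)} − dim F_v (where a loop at v contributes dim D_v to each of the two sums). -/

import Mathlib

/-!
At a vertex `v` the maps
`outMap : x ↦ ((A_e x)_{s e = v}, (B_e x)_{t e = v}, j_v x)` and
`inMap : (y, z, f) ↦ ∑ B_e y_e − ∑ A_e z_e − i_v f`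
form a complex `D_v → Nbhd v → D_v`, because their composite is minus the moment map.
Stability makes `inMap` surjective: the images of the maps `inMap w` form a subrepresentation
containing the image of the framing. Hence
`dim ker outMap = dim D_v − dim range outMap ≥ dim D_v − dim ker inMap = 2 dim D_v − dim Nbhd v`,
where `ker outMap = ⋂ ker A_e ∩ ⋂ ker B_e ∩ ker j_v`.
-/

open Module LinearMap

/-- Transport along an equality of vertices. -/
def dcast {V : Type*} (D : V → Type*) [∀ v, AddCommGroup (D v)] [∀ v, Module ℂ (D v)]
    {v w : V} (h : v = w) : D v →ₗ[ℂ] D w := by subst h; exact LinearMap.id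

/-- Stability of framed representation data `(A, B, i)` of a quiver with source/target
maps `s t : E → V`, on spaces `D` with framing spaces `F`: the only subrepresentation
containing the image of the framing maps is everything. -/
def Stable {V E : Type*} (s t : E → V)
    (D : V → Type*) [∀ v, AddCommGroup (D v)] [∀ v, Module ℂ (D v)]
    (F : V → Type*) [∀ v, AddCommGroup (F v)] [∀ v, Module ℂ (F v)]
    (A : ∀ e, D (s e) →ₗ[ℂ] D (t e))
    (B : ∀ e, D (t e) →ₗ[ℂ] D (s e))
    (i : ∀ v, F v →ₗ[ℂ] D v) : Prop :=
  ∀ S : ∀ v, Submodule ℂ (D v),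
    (∀ e, ∀ x ∈ S (s e), A e x ∈ S (t e)) →
    (∀ e, ∀ x ∈ S (t e), B e x ∈ S (s e)) →
    (∀ v, ∀ f, i v f ∈ S v) →
    ∀ v, S v = ⊤

/-- The moment map of framed representation data at a vertex `v`:
`∑_{e : t e = v} A_e ∘ B_e − ∑_{e : s e = v} B_e ∘ A_e + i_v ∘ j_v` as an
endomorphism of `D v`. -/
def momentMap {V E : Type*} [Fintype E] [DecidableEq V] (s t : E → V)
    (D : V → Type*) [∀ v, AddCommGroup (D v)] [∀ v, Module ℂ (D v)]
    (F : V → Type*) [∀ v, AddCommGroup (F v)] [∀ v, Module ℂ (F v)]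
    (A : ∀ e, D (s e) →ₗ[ℂ] D (t e))
    (B : ∀ e, D (t e) →ₗ[ℂ] D (s e))
    (i : ∀ v, F v →ₗ[ℂ] D v)
    (j : ∀ v, D v →ₗ[ℂ] F v) (v : V) : D v →ₗ[ℂ] D v :=
  (∑ e : E, if h : t e = v then dcast D h ∘ₗ A e ∘ₗ B e ∘ₗ dcast D h.symm else 0)
  - (∑ e : E, if h : s e = v then dcast D h ∘ₗ B e ∘ₗ A e ∘ₗ dcast D h.symm else 0)
  + i v ∘ₗ j v

theorem LinearMap.finrank_add_finrank_le_finrank_add_finrank_ker {K M N P : Type*}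
    [DivisionRing K] [AddCommGroup M] [Module K M] [AddCommGroup N] [Module K N]
    [AddCommGroup P] [Module K P] [FiniteDimensional K M] [FiniteDimensional K N]
    {f : M →ₗ[K] N} {g : N →ₗ[K] P} (hgf : g ∘ₗ f = 0) (hg : Function.Surjective g) :
    finrank K M + finrank K P ≤ finrank K N + finrank K (ker f) := by
  have hf := f.finrank_range_add_finrank_ker
  have hg' := g.finrank_range_add_finrank_ker
  rw [range_eq_top.2 hg, finrank_top] at hg'
  have := Submodule.finrank_mono (range_le_ker_iff.2 hgf)
  omega

theorem Fintype.sum_dite_zero {ι M : Type*} [Fintype ι] [AddCommMonoid M] {p : ι → Prop}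
    [DecidablePred p] (f : ∀ x, p x → M) :
    ∑ x, (if h : p x then f x h else 0) = ∑ x : {x // p x}, f x x.2 := by
  have hneg : ∑ x : {x // ¬p x}, (if h : p x then f x h else 0) = 0 :=
    Finset.sum_eq_zero fun x _ => dif_neg x.2
  rw [← Fintype.sum_subtype_add_sum_subtype p, hneg, add_zero]
  exact Finset.sum_congr rfl fun x _ => dif_pos x.2

theorem LinearMap.sum_comp_proj_single {R ι M : Type*} [CommSemiring R] [Fintype ι] [DecidableEq ι]
    {φ : ι → Type*} [∀ i, AddCommMonoid (φ i)] [∀ i, Module R (φ i)] [AddCommMonoid M]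
    [Module R M] (f : ∀ i, φ i →ₗ[R] M) (i : ι) (x : φ i) :
    (∑ j, f j ∘ₗ proj j) (Pi.single i x) = f i x :=
  lsum_piSingle R φ R f i x

@[simp]
theorem dcast_rfl {V : Type*} (D : V → Type*) [∀ v, AddCommGroup (D v)] [∀ v, Module ℂ (D v)]
    (v : V) : dcast D (rfl : v = v) = LinearMap.id :=
  rfl

namespace FramedQuiver

variable {V E : Type*} (s t : E → V)
  (D F : V → Type*) [∀ v, AddCommGroup (D v)] [∀ v, Module ℂ (D v)]
  [∀ v, AddCommGroup (F v)] [∀ v, Module ℂ (F v)]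
  (A : ∀ e, D (s e) →ₗ[ℂ] D (t e)) (B : ∀ e, D (t e) →ₗ[ℂ] D (s e))
  (i : ∀ v, F v →ₗ[ℂ] D v) (j : ∀ v, D v →ₗ[ℂ] F v)

abbrev Nbhd (v : V) : Type _ :=
  (∀ e : {e // s e = v}, D (t e.1)) × (∀ e : {e // t e = v}, D (s e.1)) × F v

def outMap (v : V) : D v →ₗ[ℂ] Nbhd s t D F v :=
  (pi fun e : {e // s e = v} => A e.1 ∘ₗ dcast D e.2.symm).prod
    ((pi fun e : {e // t e = v} => B e.1 ∘ₗ dcast D e.2.symm).prod (j v))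

def inMap [Fintype E] [DecidableEq V] (v : V) : Nbhd s t D F v →ₗ[ℂ] D v :=
  (∑ e : {e // s e = v}, (dcast D e.2 ∘ₗ B e.1) ∘ₗ proj e).coprod
    ((-∑ e : {e // t e = v}, (dcast D e.2 ∘ₗ A e.1) ∘ₗ proj e).coprod (-i v))

theorem ker_outMap (v : V) : ker (outMap s t D F A B j v) =
    (⨅ e : {e : E // s e = v}, ker (A e.1 ∘ₗ dcast D e.2.symm)) ⊓
      (⨅ e : {e : E // t e = v}, ker (B e.1 ∘ₗ dcast D e.2.symm)) ⊓ ker (j v) := by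
  simp only [outMap, ker_prod, ker_pi, inf_assoc]

theorem finrank_nbhd [Fintype E] [DecidableEq V] [∀ v, FiniteDimensional ℂ (D v)]
    [∀ v, FiniteDimensional ℂ (F v)] (v : V) :
    finrank ℂ (Nbhd s t D F v) =
      ∑ e ∈ Finset.univ.filter (fun e => s e = v), finrank ℂ (D (t e))
        + ∑ e ∈ Finset.univ.filter (fun e => t e = v), finrank ℂ (D (s e)) + finrank ℂ (F v) := by
  rw [finrank_prod, finrank_prod, finrank_pi_fintype, finrank_pi_fintype,
    Finset.sum_subtype (p := (s · = v)) _ (by simp) fun e => finrank ℂ (D (t e)),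
    Finset.sum_subtype (p := (t · = v)) _ (by simp) fun e => finrank ℂ (D (s e)), add_assoc]

theorem inMap_comp_outMap [Fintype E] [DecidableEq V] (v : V) :
    inMap s t D F A B i v ∘ₗ outMap s t D F A B j v = -momentMap s t D F A B i j v := by
  ext x
  simp only [momentMap, inMap, outMap, Fintype.sum_dite_zero, coprod_comp_prod, neg_comp,
    LinearMap.add_apply, LinearMap.sub_apply, LinearMap.neg_apply, comp_apply, LinearMap.sum_apply,
    proj_apply, pi_apply]
  abel

theorem inMap_surjective [Fintype E] [DecidableEq V] (hstable : Stable s t D F A B i) (v : V) :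
    Function.Surjective (inMap s t D F A B i v) := by
  classical
  refine range_eq_top.1 (hstable (fun w => range (inMap s t D F A B i w)) ?_ ?_ ?_ v)
  · intro e x _
    exact ⟨(0, Pi.single ⟨e, rfl⟩ (-x), 0), by simp [inMap, -coe_comp, sum_comp_proj_single]⟩
  · intro e x _
    exact ⟨(Pi.single ⟨e, rfl⟩ x, 0, 0), by simp [inMap, -coe_comp, sum_comp_proj_single]⟩
  · intro w f
    exact ⟨(0, 0, -f), by simp [inMap]⟩

end FramedQuiver

open FramedQuiver

theorem dim_hom_lower_bound_general
    {V E : Type*} [Fintype E] [DecidableEq V] (s t : E → V)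
    (D F : V → Type*)
    [∀ v, AddCommGroup (D v)] [∀ v, Module ℂ (D v)] [∀ v, FiniteDimensional ℂ (D v)]
    [∀ v, AddCommGroup (F v)] [∀ v, Module ℂ (F v)] [∀ v, FiniteDimensional ℂ (F v)]
    (A : ∀ e, D (s e) →ₗ[ℂ] D (t e)) (B : ∀ e, D (t e) →ₗ[ℂ] D (s e))
    (i : ∀ v, F v →ₗ[ℂ] D v) (j : ∀ v, D v →ₗ[ℂ] F v)
    (hstable : Stable s t D F A B i)
    (hmoment : ∀ v, momentMap s t D F A B i j v = 0) :
    ∀ v, 2 * (finrank ℂ (D v) : ℤ)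
        - ∑ e ∈ Finset.univ.filter (fun e => s e = v), (finrank ℂ (D (t e)) : ℤ)
        - ∑ e ∈ Finset.univ.filter (fun e => t e = v), (finrank ℂ (D (s e)) : ℤ)
        - (finrank ℂ (F v) : ℤ)
      ≤ (finrank ℂ
          ↥((⨅ e : {e : E // s e = v}, LinearMap.ker (A e.1 ∘ₗ dcast D e.2.symm)) ⊓
            (⨅ e : {e : E // t e = v}, LinearMap.ker (B e.1 ∘ₗ dcast D e.2.symm)) ⊓
            LinearMap.ker (j v)) : ℤ) := by
  intro v
  have hcomplex : inMap s t D F A B i v ∘ₗ outMap s t D F A B j v = 0 := by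
    rw [inMap_comp_outMap, hmoment, neg_zero]
  have key := finrank_add_finrank_le_finrank_add_finrank_ker hcomplex
    (inMap_surjective s t D F A B i hstable v)
  rw [ker_outMap, finrank_nbhd] at key
  push_cast [← Nat.cast_sum]
  omega

/-- Lower bound on the dimension of `Hom(ℂ_v, D)` for a stable representation
satisfying the moment map equations. -/
theorem dim_hom_lower_bound
    {V E : Type*} [Fintype V] [Fintype E] [DecidableEq V] (s t : E → V)
    (D F : V → Type*)
    [∀ v, AddCommGroup (D v)] [∀ v, Module ℂ (D v)] [∀ v, FiniteDimensional ℂ (D v)]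
    [∀ v, AddCommGroup (F v)] [∀ v, Module ℂ (F v)] [∀ v, FiniteDimensional ℂ (F v)]
    (A : ∀ e, D (s e) →ₗ[ℂ] D (t e)) (B : ∀ e, D (t e) →ₗ[ℂ] D (s e))
    (i : ∀ v, F v →ₗ[ℂ] D v) (j : ∀ v, D v →ₗ[ℂ] F v)
    (hstable : Stable s t D F A B i)
    (hmoment : ∀ v, momentMap s t D F A B i j v = 0) :
    ∀ v, 2 * (finrank ℂ (D v) : ℤ)
        - ∑ e ∈ Finset.univ.filter (fun e => s e = v), (finrank ℂ (D (t e)) : ℤ)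
        - ∑ e ∈ Finset.univ.filter (fun e => t e = v), (finrank ℂ (D (s e)) : ℤ)
        - (finrank ℂ (F v) : ℤ)
      ≤ (finrank ℂ
          ↥((⨅ e : {e : E // s e = v}, LinearMap.ker (A e.1 ∘ₗ dcast D e.2.symm)) ⊓
            (⨅ e : {e : E // t e = v}, LinearMap.ker (B e.1 ∘ₗ dcast D e.2.symm)) ⊓
            LinearMap.ker (j v)) : ℤ) :=
  dim_hom_lower_bound_general s t D F A B i j hstable hmoment
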